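/- Suppose the player set ι and every action set A i are finite. Then there is no infinite sequence of strategy profiles a : ℕ → (Π i, A i) such that for every n, a n ∈ F, there is a player i_n with a (n+1) j = a n j for all j ≠ i_n, and U i_n (a (n+1)) > U i_n (a n). That is, the game satisfies the finite improvement property: every strict feasible-improvement path terminates after finitely many steps. -/

import Mathlib

/-!
A unilateral deviation by player `i` does not change the profile in which `i` plays its null
action, so it changes `i`'s marginal utility exactly as much as it changes `Φ`. Hence `Φ`
strictly increases along an improvement path, which therefore never revisits a profile;
this is impossible in the finite space of profiles.
-/

/-- The marginal-contribution utility of player `i` at profile `a`, given the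
potential function `Φ` and null actions `ν`. -/
def marginalUtility {ι : Type*} [DecidableEq ι] {A : ι → Type*}
    (Φ : (∀ i, A i) → ℝ) (ν : ∀ i, A i) (i : ι) (a : ∀ i, A i) : ℝ :=
  Φ a - Φ (Function.update a i (ν i))

theorem Function.update_eq_update_of_eq_off {ι : Type*} [DecidableEq ι] {A : ι → Type*}
    {a b : ∀ i, A i} {i : ι} (h : ∀ j, j ≠ i → b j = a j) (x : A i) :
    Function.update b i x = Function.update a i x :=
  Function.update_eq_iff.mpr
    ⟨(Function.update_self ..).symm, fun j hj => by rw [Function.update_of_ne hj, h j hj]⟩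

theorem marginalUtility_lt_marginalUtility_iff {ι : Type*} [DecidableEq ι] {A : ι → Type*}
    (Φ : (∀ i, A i) → ℝ) (ν : ∀ i, A i) {i : ι} {a b : ∀ i, A i}
    (h : ∀ j, j ≠ i → b j = a j) :
    marginalUtility Φ ν i a < marginalUtility Φ ν i b ↔ Φ a < Φ b := by
  simp only [marginalUtility, Function.update_eq_update_of_eq_off h, sub_lt_sub_iff_right]

theorem Finite.not_forall_lt_comp_succ {α β : Type*} [Finite α] [Preorder β]
    (f : α → β) (a : ℕ → α) : ¬ ∀ n, f (a n) < f (a (n + 1)) := fun h =>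
  have hmono : StrictMono (f ∘ a) := strictMono_nat_of_lt_succ h
  (Finite.of_injective a hmono.injective.of_comp).false

theorem finite_improvement_property_general
    {ι : Type*} [Fintype ι] [DecidableEq ι] {A : ι → Type*}
    [∀ i, Fintype (A i)]
    (Φ : (∀ i, A i) → ℝ) (ν : ∀ i, A i) (F : Set (∀ i, A i)) :
    ¬ ∃ a : ℕ → (∀ i, A i),
        ∀ n : ℕ, a n ∈ F ∧
          ∃ i : ι, (∀ j, j ≠ i → a (n + 1) j = a n j) ∧
            marginalUtility Φ ν i (a n) < marginalUtility Φ ν i (a (n + 1)) := by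
  rintro ⟨a, ha⟩
  refine Finite.not_forall_lt_comp_succ Φ a fun n => ?_
  obtain ⟨-, i, hoff, hlt⟩ := ha n
  exact (marginalUtility_lt_marginalUtility_iff Φ ν hoff).mp hlt

/-- Finite improvement property: with finitely many players and finite action
sets, there is no infinite strict feasible-improvement path, i.e. no sequence of
profiles in `F` in which every step is a strict unilateral utility improvement
by some player. -/
theorem finite_improvement_property
    {ι : Type*} [Fintype ι] [DecidableEq ι] {A : ι → Type*}
    [∀ i, Fintype (A i)] [∀ i, Nonempty (A i)]
    (Φ : (∀ i, A i) → ℝ) (ν : ∀ i, A i) (F : Set (∀ i, A i)) :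
    ¬ ∃ a : ℕ → (∀ i, A i),
        ∀ n : ℕ, a n ∈ F ∧
          ∃ i : ι, (∀ j, j ≠ i → a (n + 1) j = a n j) ∧
            marginalUtility Φ ν i (a n) < marginalUtility Φ ν i (a (n + 1)) :=
  finite_improvement_property_general Φ ν F
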